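/- arXiv:2203.01505 — 8 statements merged into one kernel-verified Lean document; each statement's English description precedes it below -/
import Mathlib

section
/- Let d, N₊, N₋ be positive integers, L ≥ 0, and for each i ∈ {1,…,N₊} and j ∈ {1,…,N₋} let s_{ij} : ℝ^d → ℝ be differentiable with L-Lipschitz gradient (i.e. ‖∇s_{ij}(w) − ∇s_{ij}(v)‖ ≤ L‖w−v‖ for all w,v). For an integer 0 ≤ l ≤ N₋ define f^l(w) = Σ_{i=1}^{N₊} φ_l((s_{ij}(w))_{j=1}^{N₋}). Then f^l is ρ-weakly convex with ρ = N₊N₋L; that is, the function w ↦ f^l(w) + (N₊N₋L/2)‖w‖² is convex on ℝ^d. -/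
open scoped RealInnerProductSpace

/-- `sumTop l s` is the sum of the `l` largest entries of `s ∈ ℝ^N`, i.e.
`φ_l(s) = max { ∑_{j∈J} s_j : J ⊆ {1,…,N}, |J| = l }`. -/
noncomputable def sumTop {N : ℕ} (l : ℕ) (s : Fin N → ℝ) : ℝ :=
  sSup {x : ℝ | ∃ J : Finset (Fin N), J.card = l ∧ x = ∑ j ∈ J, s j}

/-!
A function whose gradient is `K`-Lipschitz is `K`-weakly convex: by Cauchy–Schwarz the gradient
`∇f + K • id` of `f + K/2 ‖·‖²` is monotone, and a function with monotone gradient is convex on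
every line. Weak convexity with modulus `ρ` is Mathlib's `StrongConvexOn univ (-ρ)`; the modulus adds
up under finite sums and is kept by finite maxima. Since `φ_l` is the maximum over `l`-subsets `J`
of `∑_{j ∈ J} s_j`, each summand of `f^l` is `l L ≤ N₋ L`-weakly convex, and `f^l` is
`N₊ N₋ L`-weakly convex.
-/

open Set AffineMap

section UniformConvex

variable {E ι : Type*} [NormedAddCommGroup E] [NormedSpace ℝ E] {s : Set E}

lemma UniformConvexOn.sup {φ : ℝ → ℝ} {f g : E → ℝ} (hf : UniformConvexOn s φ f)
    (hg : UniformConvexOn s φ g) : UniformConvexOn s φ (f ⊔ g) := by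
  refine ⟨hf.1, fun x hx y hy a b ha hb hab => sup_le ?_ ?_⟩
  · calc f (a • x + b • y) ≤ a • f x + b • f y - a * b * φ ‖x - y‖ := hf.2 hx hy ha hb hab
      _ ≤ a • (f ⊔ g) x + b • (f ⊔ g) y - a * b * φ ‖x - y‖ := by
        gcongr <;> exact le_sup_left
  · calc g (a • x + b • y) ≤ a • g x + b • g y - a * b * φ ‖x - y‖ := hg.2 hx hy ha hb hab
      _ ≤ a • (f ⊔ g) x + b • (f ⊔ g) y - a * b * φ ‖x - y‖ := by
        gcongr <;> exact le_sup_right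

lemma UniformConvexOn.finset_sup' {φ : ℝ → ℝ} {t : Finset ι} (ht : t.Nonempty) {f : ι → E → ℝ}
    (hf : ∀ i ∈ t, UniformConvexOn s φ (f i)) :
    UniformConvexOn s φ (fun x => t.sup' ht fun i => f i x) := by
  simpa only [← Finset.sup'_apply] using
    Finset.sup'_induction ht f (fun _ h₁ _ h₂ => h₁.sup h₂) hf

lemma StrongConvexOn.add {m n : ℝ} {f g : E → ℝ} (hf : StrongConvexOn s m f)
    (hg : StrongConvexOn s n g) : StrongConvexOn s (m + n) (f + g) :=
  (UniformConvexOn.add hf hg).mono fun r => le_of_eq (by simp only [Pi.add_apply]; ring)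

lemma StrongConvexOn.finset_sum (hs : Convex ℝ s) (t : Finset ι) {m : ι → ℝ} {f : ι → E → ℝ}
    (hf : ∀ i ∈ t, StrongConvexOn s (m i) (f i)) :
    StrongConvexOn s (∑ i ∈ t, m i) (fun x => ∑ i ∈ t, f i x) := by
  induction t using Finset.cons_induction with
  | empty => simpa using convexOn_const 0 hs
  | cons a t ha ih =>
    simp only [Finset.sum_cons]
    exact (hf a (t.mem_cons_self a)).add (ih fun i hi => hf i (Finset.mem_cons_of_mem hi))

end UniformConvex

lemma strongConvexOn_neg_iff {E : Type*} [NormedAddCommGroup E] [InnerProductSpace ℝ E]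
    {s : Set E} {ρ : ℝ} {f : E → ℝ} :
    StrongConvexOn s (-ρ) f ↔ ConvexOn ℝ s fun x => f x + ρ / 2 * ‖x‖ ^ 2 := by
  simp only [strongConvexOn_iff_convex, neg_div, neg_mul, sub_neg_eq_add]

lemma convexOn_univ_of_convexOn_lineMap {E : Type*} [AddCommGroup E] [Module ℝ E] {f : E → ℝ}
    (h : ∀ x y : E, ConvexOn ℝ univ (fun t : ℝ => f (lineMap x y t))) : ConvexOn ℝ univ f := by
  refine ⟨convex_univ, fun x _ y _ a b ha hb hab => ?_⟩
  have hline := (h x y).2 (mem_univ 0) (mem_univ 1) ha hb hab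
  have hb' : a • (0 : ℝ) + b • 1 = b := by simp
  dsimp only at hline
  rwa [hb', lineMap_apply_zero, lineMap_apply_one, lineMap_apply_module,
    show 1 - b = a by linarith] at hline

section Gradient

variable {F : Type*} [NormedAddCommGroup F] [InnerProductSpace ℝ F] [CompleteSpace F]

lemma convexOn_univ_of_hasGradientAt_of_monotone {f : F → ℝ} {G : F → F}
    (hf : ∀ x, HasGradientAt f (G x) x) (hG : ∀ x y, 0 ≤ ⟪G x - G y, x - y⟫) :
    ConvexOn ℝ univ f := by
  refine convexOn_univ_of_convexOn_lineMap fun x y => ?_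
  have hderiv (t : ℝ) :
      HasDerivAt (fun t => f (lineMap x y t)) ⟪G (lineMap x y t), y - x⟫ t := by
    have h := (hf _).hasFDerivAt.comp_hasDerivAt t (hasDerivAt_lineMap (a := x) (b := y))
    rw [InnerProductSpace.toDual_apply_apply] at h
    exact h
  refine Monotone.convexOn_univ_of_deriv (fun t => (hderiv t).differentiableAt) ?_
  intro u v huv
  simp only [(hderiv _).deriv]
  rcases huv.eq_or_lt with rfl | hlt
  · rfl
  have hsub : lineMap x y v - lineMap x y u = (v - u) • (y - x) := by
    simp only [lineMap_apply_module']
    module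
  have hmono := hG (lineMap x y v) (lineMap x y u)
  rw [hsub, real_inner_smul_right] at hmono
  rw [← sub_nonneg, ← inner_sub_left]
  exact nonneg_of_mul_nonneg_right hmono (sub_pos.2 hlt)

lemma HasGradientAt.add {f g : F → ℝ} {f' g' x : F} (hf : HasGradientAt f f' x)
    (hg : HasGradientAt g g' x) : HasGradientAt (fun y => f y + g y) (f' + g') x := by
  rw [hasGradientAt_iff_hasFDerivAt, map_add]
  exact hf.hasFDerivAt.add hg.hasFDerivAt

lemma hasGradientAt_half_mul_norm_sq (c : ℝ) (x : F) :
    HasGradientAt (fun y => c / 2 * ‖y‖ ^ 2) (c • x) x := by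
  rw [hasGradientAt_iff_hasFDerivAt]
  refine ((hasStrictFDerivAt_norm_sq x).hasFDerivAt.const_mul (c / 2)).congr_fderiv ?_
  ext v
  simp only [_root_.smul_apply, coe_innerSL_apply, nsmul_eq_mul, Nat.cast_ofNat,
    smul_eq_mul, map_smul, InnerProductSpace.toDual_apply_apply]
  ring

lemma strongConvexOn_univ_neg_of_lipschitz_gradient {f : F → ℝ} {G : F → F} {K : ℝ}
    (hf : ∀ x, HasGradientAt f (G x) x) (hG : ∀ x y, ‖G x - G y‖ ≤ K * ‖x - y‖) :
    StrongConvexOn univ (-K) f := by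
  rw [strongConvexOn_neg_iff]
  refine convexOn_univ_of_hasGradientAt_of_monotone
    (fun x => (hf x).add (hasGradientAt_half_mul_norm_sq K x)) fun x y => ?_
  have hsplit : ⟪G x + K • x - (G y + K • y), x - y⟫ = ⟪G x - G y, x - y⟫ + K * ‖x - y‖ ^ 2 := by
    rw [show G x + K • x - (G y + K • y) = (G x - G y) + K • (x - y) by module,
      inner_add_left, real_inner_smul_left, real_inner_self_eq_norm_sq]
  have hcs : -(‖G x - G y‖ * ‖x - y‖) ≤ ⟪G x - G y, x - y⟫ :=
    neg_le_of_abs_le (abs_real_inner_le_norm _ _)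
  rw [hsplit]
  nlinarith [mul_le_mul_of_nonneg_right (hG x y) (norm_nonneg (x - y))]

end Gradient

lemma sumTop_eq_sup' {N l : ℕ}
    (hne : (Finset.powersetCard l (Finset.univ : Finset (Fin N))).Nonempty) (s : Fin N → ℝ) :
    sumTop l s = (Finset.powersetCard l Finset.univ).sup' hne fun J => ∑ j ∈ J, s j := by
  rw [Finset.sup'_eq_csSup_image, sumTop]
  congr 1
  ext x
  simp [Finset.mem_powersetCard, eq_comm]

theorem stmt0_general (d Np Nm : ℕ)
    (L : ℝ) (hL : 0 ≤ L)
    (s : Fin Np → Fin Nm → EuclideanSpace ℝ (Fin d) → ℝ)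
    (grad : Fin Np → Fin Nm → EuclideanSpace ℝ (Fin d) → EuclideanSpace ℝ (Fin d))
    (hdiff : ∀ i j w, HasGradientAt (s i j) (grad i j w) w)
    (hlip : ∀ (i : Fin Np) (j : Fin Nm) (w v : EuclideanSpace ℝ (Fin d)),
      ‖grad i j w - grad i j v‖ ≤ L * ‖w - v‖)
    (l : ℕ) (hl : l ≤ Nm) :
    ConvexOn ℝ Set.univ
      (fun w : EuclideanSpace ℝ (Fin d) =>
        (∑ i, sumTop l (fun j => s i j w)) + ((Np : ℝ) * Nm * L / 2) * ‖w‖ ^ 2) := by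
  have hne : (Finset.powersetCard l (Finset.univ : Finset (Fin Nm))).Nonempty :=
    Finset.powersetCard_nonempty.2 (by simpa using hl)
  have hsummand (i : Fin Np) :
      StrongConvexOn univ (-(Nm * L)) fun w => sumTop l fun j => s i j w := by
    simp only [sumTop_eq_sup' hne]
    refine UniformConvexOn.finset_sup' hne fun J hJ => ?_
    refine (StrongConvexOn.finset_sum convex_univ J fun j _ =>
      strongConvexOn_univ_neg_of_lipschitz_gradient (hdiff i j) (hlip i j)).mono ?_
    rw [Finset.sum_const, (Finset.mem_powersetCard.1 hJ).2, nsmul_eq_mul]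
    have hlNm : (l : ℝ) ≤ Nm := by exact_mod_cast hl
    nlinarith
  have htotal := StrongConvexOn.finset_sum convex_univ Finset.univ fun i _ => hsummand i
  rwa [Finset.sum_const, Finset.card_univ, Fintype.card_fin, nsmul_eq_mul, mul_neg,
    ← mul_assoc, strongConvexOn_neg_iff] at htotal

/-- If each `s i j : ℝ^d → ℝ` is differentiable with `L`-Lipschitz gradient, then
`f^l(w) = ∑_i φ_l((s_{ij}(w))_j)` is `ρ`-weakly convex with `ρ = N₊N₋L`, i.e.
`w ↦ f^l(w) + (N₊N₋L/2)‖w‖²` is convex on `ℝ^d`. -/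
theorem stmt0 (d Np Nm : ℕ) (hd : 0 < d) (hNp : 0 < Np) (hNm : 0 < Nm)
    (L : ℝ) (hL : 0 ≤ L)
    (s : Fin Np → Fin Nm → EuclideanSpace ℝ (Fin d) → ℝ)
    (grad : Fin Np → Fin Nm → EuclideanSpace ℝ (Fin d) → EuclideanSpace ℝ (Fin d))
    (hdiff : ∀ i j w, HasGradientAt (s i j) (grad i j w) w)
    (hlip : ∀ (i : Fin Np) (j : Fin Nm) (w v : EuclideanSpace ℝ (Fin d)),
      ‖grad i j w - grad i j v‖ ≤ L * ‖w - v‖)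
    (l : ℕ) (hl : l ≤ Nm) :
    ConvexOn ℝ Set.univ
      (fun w : EuclideanSpace ℝ (Fin d) =>
        (∑ i, sumTop l (fun j => s i j w)) + ((Np : ℝ) * Nm * L / 2) * ‖w‖ ^ 2) :=
  stmt0_general d Np Nm L hL s grad hdiff hlip l hl
end

section
/- Let f : ℝ^d → ℝ be continuous and ρ-weakly convex and let 0 < μ < 1/ρ. Then the proximal mapping w ↦ v_{μf}(w) is (1−μρ)⁻¹-Lipschitz continuous: ‖v_{μf}(w₁) − v_{μf}(w₂)‖ ≤ (1−μρ)⁻¹‖w₁ − w₂‖ for all w₁, w₂ ∈ ℝ^d. -/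
/-!
Adding `‖u - w‖² / (2μ)` to a `ρ`-weakly convex `f` gives a `(μ⁻¹ - ρ)`-strongly convex
function, and a minimizer `x` of an `m`-strongly convex function satisfies
`g x + m/2 ‖y - x‖² ≤ g y`. Adding these inequalities for the proximal objectives at `w₁` and
`w₂`, each tested at the other's proximal point, turns the quadratic terms into an inner
product: `(1 - μρ) ‖v₁ - v₂‖² ≤ ⟪v₁ - v₂, w₁ - w₂⟫`, and Cauchy–Schwarz finishes.
-/

open Filter Topology
open scoped RealInnerProductSpace

theorem StrongConvexOn.add_sq_norm_sub_le_of_isMinOn {E : Type*} [NormedAddCommGroup E]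
    [NormedSpace ℝ E] {s : Set E} {m : ℝ} {f : E → ℝ} {x y : E} (hf : StrongConvexOn s m f)
    (hmin : IsMinOn f s x) (hx : x ∈ s) (hy : y ∈ s) :
    f x + m / 2 * ‖y - x‖ ^ 2 ≤ f y := by
  set c := m / 2 * ‖y - x‖ ^ 2
  have hsegment : ∀ t ∈ Set.Ioo (0 : ℝ) 1, f x + (1 - t) * c ≤ f y := by
    rintro t ⟨ht0, ht1⟩
    have hab : 1 - t + t = 1 := sub_add_cancel 1 t
    have hconv : f ((1 - t) • x + t • y) ≤ (1 - t) * f x + t * f y - (1 - t) * t * c := by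
      simpa only [c, smul_eq_mul, norm_sub_rev x y] using
        hf.2 hx hy (sub_nonneg.2 ht1.le) ht0.le hab
    have hle := isMinOn_iff.1 hmin _ (hf.1 hx hy (sub_nonneg.2 ht1.le) ht0.le hab)
    refine le_of_mul_le_mul_left ?_ ht0
    linarith
  have hlim : Tendsto (fun t : ℝ => f x + (1 - t) * c) (𝓝[>] 0) (𝓝 (f x + c)) :=
    tendsto_nhdsWithin_of_tendsto_nhds (Continuous.tendsto' (by fun_prop) _ _ (by simp))
  exact le_of_tendsto hlim (mem_of_superset (Ioo_mem_nhdsGT one_pos) hsegment)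

theorem ConvexOn.strongConvexOn_add_norm_sub_sq_div {E : Type*} [NormedAddCommGroup E]
    [InnerProductSpace ℝ E] {s : Set E} {f : E → ℝ} {ρ : ℝ}
    (hf : ConvexOn ℝ s fun u => f u + ρ / 2 * ‖u‖ ^ 2) (μ : ℝ) (w : E) :
    StrongConvexOn s (μ⁻¹ - ρ) fun u => f u + ‖u - w‖ ^ 2 / (2 * μ) := by
  rw [strongConvexOn_iff_convex]
  refine ((hf.add ((-μ⁻¹ • innerₛₗ ℝ w).convexOn hf.1)).add_const (‖w‖ ^ 2 / (2 * μ))).congr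
    fun u _ => ?_
  simp only [Pi.add_apply, LinearMap.smul_apply, innerₛₗ_apply_apply, smul_eq_mul,
    norm_sub_sq_real, real_inner_comm w u]
  ring

theorem two_mul_inner_sub_sub_eq {E : Type*} [NormedAddCommGroup E] [InnerProductSpace ℝ E]
    (a b c d : E) :
    2 * ⟪a - b, c - d⟫ = ‖b - c‖ ^ 2 + ‖a - d‖ ^ 2 - ‖a - c‖ ^ 2 - ‖b - d‖ ^ 2 := by
  simp only [norm_sub_sq_real, inner_sub_left, inner_sub_right]
  ring

theorem norm_le_inv_mul_of_mul_sq_le_inner {E : Type*} [NormedAddCommGroup E]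
    [InnerProductSpace ℝ E] {a b : E} {c : ℝ} (hc : 0 < c) (h : c * ‖a‖ ^ 2 ≤ ⟪a, b⟫) :
    ‖a‖ ≤ c⁻¹ * ‖b‖ := by
  have hcs : c * ‖a‖ ^ 2 ≤ ‖a‖ * ‖b‖ := h.trans (real_inner_le_norm a b)
  rw [inv_mul_eq_div, le_div_iff₀ hc]
  rcases (norm_nonneg a).eq_or_lt with ha | ha
  · simp [← ha]
  · nlinarith

theorem ConvexOn.one_sub_mul_sq_norm_sub_le_inner_of_isMinOn {E : Type*} [NormedAddCommGroup E]
    [InnerProductSpace ℝ E] {s : Set E} {f : E → ℝ} {ρ μ : ℝ} {w₁ w₂ v₁ v₂ : E}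
    (hf : ConvexOn ℝ s fun u => f u + ρ / 2 * ‖u‖ ^ 2) (hμ : 0 < μ)
    (hmin₁ : IsMinOn (fun u => f u + ‖u - w₁‖ ^ 2 / (2 * μ)) s v₁)
    (hmin₂ : IsMinOn (fun u => f u + ‖u - w₂‖ ^ 2 / (2 * μ)) s v₂)
    (hv₁ : v₁ ∈ s) (hv₂ : v₂ ∈ s) :
    (1 - μ * ρ) * ‖v₁ - v₂‖ ^ 2 ≤ ⟪v₁ - v₂, w₁ - w₂⟫ := by
  have h₁ := (hf.strongConvexOn_add_norm_sub_sq_div μ w₁).add_sq_norm_sub_le_of_isMinOn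
    hmin₁ hv₁ hv₂
  have h₂ := (hf.strongConvexOn_add_norm_sub_sq_div μ w₂).add_sq_norm_sub_le_of_isMinOn
    hmin₂ hv₂ hv₁
  rw [norm_sub_rev v₂ v₁] at h₁
  have hsum : (μ⁻¹ - ρ) * ‖v₁ - v₂‖ ^ 2 ≤ μ⁻¹ * ⟪v₁ - v₂, w₁ - w₂⟫ := by
    linear_combination h₁ + h₂ - (2 * μ)⁻¹ * two_mul_inner_sub_sub_eq v₁ v₂ w₁ w₂
  calc (1 - μ * ρ) * ‖v₁ - v₂‖ ^ 2 = μ * ((μ⁻¹ - ρ) * ‖v₁ - v₂‖ ^ 2) := by field_simp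
    _ ≤ μ * (μ⁻¹ * ⟪v₁ - v₂, w₁ - w₂⟫) := by gcongr
    _ = ⟪v₁ - v₂, w₁ - w₂⟫ := by field_simp

theorem stmt5_general (d : ℕ) (f : EuclideanSpace ℝ (Fin d) → ℝ) (ρ : ℝ)
    (hwc : ConvexOn ℝ Set.univ (fun w => f w + ρ / 2 * ‖w‖ ^ 2))
    (μ : ℝ) (hμ : 0 < μ) (hμρ : μ * ρ < 1)
    (v : EuclideanSpace ℝ (Fin d) → EuclideanSpace ℝ (Fin d))
    (hmin : ∀ w u, f (v w) + ‖v w - w‖ ^ 2 / (2 * μ) ≤ f u + ‖u - w‖ ^ 2 / (2 * μ)) :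
    ∀ w₁ w₂, ‖v w₁ - v w₂‖ ≤ (1 - μ * ρ)⁻¹ * ‖w₁ - w₂‖ := by
  intro w₁ w₂
  have hprox : ∀ w, IsMinOn (fun u => f u + ‖u - w‖ ^ 2 / (2 * μ)) Set.univ (v w) :=
    fun w => isMinOn_univ_iff.2 (hmin w)
  exact norm_le_inv_mul_of_mul_sq_le_inner (sub_pos.2 hμρ)
    (hwc.one_sub_mul_sq_norm_sub_le_inner_of_isMinOn hμ (hprox w₁) (hprox w₂) trivial trivial)

/-- If `f : ℝ^d → ℝ` is continuous and `ρ`-weakly convex, `0 < μ < 1/ρ` (encoded as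
`0 < μ` and `μρ < 1`), and `v w` denotes the (unique) minimizer of
`u ↦ f(u) + ‖u−w‖²/(2μ)`, then the proximal mapping `w ↦ v w` is
`(1−μρ)⁻¹`-Lipschitz continuous. -/
theorem stmt5 (d : ℕ) (f : EuclideanSpace ℝ (Fin d) → ℝ) (ρ : ℝ) (hρ : 0 ≤ ρ)
    (hcont : Continuous f)
    (hwc : ConvexOn ℝ Set.univ (fun w => f w + ρ / 2 * ‖w‖ ^ 2))
    (μ : ℝ) (hμ : 0 < μ) (hμρ : μ * ρ < 1)
    (v : EuclideanSpace ℝ (Fin d) → EuclideanSpace ℝ (Fin d))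
    (hmin : ∀ w u, f (v w) + ‖v w - w‖ ^ 2 / (2 * μ) ≤ f u + ‖u - w‖ ^ 2 / (2 * μ)) :
    ∀ w₁ w₂, ‖v w₁ - v w₂‖ ≤ (1 - μ * ρ)⁻¹ * ‖w₁ - w₂‖ :=
  stmt5_general d f ρ hwc μ hμ hμρ v hmin
end

section
/- Let f^m, f^n : ℝ^d → ℝ be continuous and ρ-weakly convex, let 0 < μ < 1/ρ, and define F^μ(w) = f^n_μ(w) − f^m_μ(w). Let (Ω, ℱ, P) be a probability space, let ε > 0, and let W, V̄ : Ω → ℝ^d be random vectors such that E‖∇F^μ(W)‖² ≤ min{1, μ⁻²}ε²/4 and E‖V̄ − v_{μf^n}(W)‖² ≤ ε²/4. Define w′(ω) = v_{μf^n}(W(ω)), w″(ω) = v_{μf^m}(W(ω)), ξ_n(ω) = μ⁻¹(W(ω) − w′(ω)), ξ_m(ω) = μ⁻¹(W(ω) − w″(ω)), and ξ(ω) = ξ_n(ω) − ξ_m(ω) = μ⁻¹(w″(ω) − w′(ω)). Then: (i) for every ω ∈ Ω and every u ∈ ℝ^d, f^n(u) ≥ f^n(w′(ω)) + ⟨ξ_n(ω),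 u − w′(ω)⟩ − (2μ)⁻¹‖u − w′(ω)‖² and f^m(u) ≥ f^m(w″(ω)) + ⟨ξ_m(ω), u − w″(ω)⟩ − (2μ)⁻¹‖u − w″(ω)‖² (so ξ(ω) ∈ ∂f^n(w′(ω)) − ∂f^m(w″(ω))); and (ii) E‖ξ‖ ≤ ε, E‖V̄ − w′‖ ≤ ε, and E‖V̄ − w″‖ ≤ ε — that is, V̄ is a nearly ε-critical point in expectation. -/
open MeasureTheory ProbabilityTheory
open scoped RealInnerProductSpace

/-!
Part (i) is the first-order optimality of a proximal point, obtained by expanding a square in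
its minimality. Part (ii) is Jensen's inequality `E X ≤ √(E X²)`, applied to `‖∇F^μ(W)‖` (with
both bounds `ε/2` and `ε/(2μ)` supplied by the `min`) and to `‖V̄ - w′‖`, together with the
triangle inequality `‖V̄ - w″‖ ≤ ‖V̄ - w′‖ + μ ‖∇F^μ(W)‖`.
-/

section Jensen

variable {Ω : Type*} [MeasurableSpace Ω] {P : Measure Ω}

lemma memLp_two_of_nonneg_of_integrable_sq {X : Ω → ℝ} (hX : ∀ ω, 0 ≤ X ω)
    (hX2 : Integrable (fun ω => X ω ^ 2) P) : MemLp X 2 P := by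
  have hmeas : AEStronglyMeasurable X P :=
    (Real.continuous_sqrt.comp_aestronglyMeasurable hX2.1).congr <|
      Filter.Eventually.of_forall fun ω => Real.sqrt_sq (hX ω)
  exact (memLp_two_iff_integrable_sq hmeas).2 hX2

lemma integral_le_add_const_mul_of_le {X Y Z : Ω → ℝ} (hX : Integrable X P) (hY : Integrable Y P)
    (hZ : ∀ ω, 0 ≤ Z ω) (c : ℝ) (hle : ∀ ω, Z ω ≤ X ω + c * Y ω) :
    ∫ ω, Z ω ∂P ≤ ∫ ω, X ω ∂P + c * ∫ ω, Y ω ∂P := by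
  rw [← integral_const_mul, ← integral_add hX (hY.const_mul c)]
  exact integral_mono_of_nonneg (Filter.Eventually.of_forall hZ) (hX.add (hY.const_mul c))
    (Filter.Eventually.of_forall hle)

variable [IsProbabilityMeasure P]

lemma sq_integral_le_integral_sq {X : Ω → ℝ} (hX : MemLp X 2 P) :
    (∫ ω, X ω ∂P) ^ 2 ≤ ∫ ω, X ω ^ 2 ∂P := by
  have hvar := variance_nonneg X P
  rw [variance_eq_sub hX] at hvar
  simpa only [Pi.pow_apply, sub_nonneg] using hvar

lemma integral_le_of_integral_sq_le {X : Ω → ℝ} (hX : MemLp X 2 P) {c : ℝ} (hc : 0 ≤ c)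
    (hXc : ∫ ω, X ω ^ 2 ∂P ≤ c ^ 2) : ∫ ω, X ω ∂P ≤ c :=
  le_of_sq_le_sq ((sq_integral_le_integral_sq hX).trans hXc) hc

end Jensen

lemma le_sq_of_le_min_one_inv_sq_mul {a μ ε : ℝ}
    (ha : a ≤ min 1 ((μ ^ 2)⁻¹) * ε ^ 2 / 4) : a ≤ (ε / 2) ^ 2 ∧ a ≤ (ε / (2 * μ)) ^ 2 := by
  constructor
  · calc a ≤ min 1 ((μ ^ 2)⁻¹) * ε ^ 2 / 4 := ha
      _ ≤ 1 * ε ^ 2 / 4 := by gcongr; exact min_le_left _ _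
      _ = (ε / 2) ^ 2 := by ring
  · calc a ≤ min 1 ((μ ^ 2)⁻¹) * ε ^ 2 / 4 := ha
      _ ≤ (μ ^ 2)⁻¹ * ε ^ 2 / 4 := by gcongr; exact min_le_right _ _
      _ = (ε / (2 * μ)) ^ 2 := by ring

section Prox

variable {E : Type*} [NormedAddCommGroup E] [InnerProductSpace ℝ E]

/-- `v = v_{μf}(w)`: `v` minimizes `u ↦ f u + ‖u - w‖² / (2μ)`. -/
def IsProxPoint (f : E → ℝ) (μ : ℝ) (w v : E) : Prop :=
  ∀ u, f v + ‖v - w‖ ^ 2 / (2 * μ) ≤ f u + ‖u - w‖ ^ 2 / (2 * μ)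

/-- Expand `‖u - w‖² = ‖u - v‖² + 2⟪u - v, v - w⟫ + ‖v - w‖²` in the minimality of `v`. -/
lemma IsProxPoint.subgradient_ineq {f : E → ℝ} {μ : ℝ} {w v : E} (hv : IsProxPoint f μ w v)
    (u : E) : f v + ⟪μ⁻¹ • (w - v), u - v⟫ - (2 * μ)⁻¹ * ‖u - v‖ ^ 2 ≤ f u := by
  have hexp := norm_add_sq_real (u - v) (v - w)
  rw [sub_add_sub_cancel] at hexp
  have hinner : ⟪w - v, u - v⟫ = -⟪u - v, v - w⟫ := by
    rw [real_inner_comm, ← neg_sub v w, inner_neg_right]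
  have hinv : μ⁻¹ = 2 * (2 * μ)⁻¹ := by
    rw [mul_inv, ← mul_assoc, mul_inv_cancel₀ two_ne_zero, one_mul]
  have hmin := hv u
  rw [div_eq_inv_mul, div_eq_inv_mul, hexp] at hmin
  rw [real_inner_smul_left, hinner, hinv]
  linarith

end Prox

theorem stmt7_general (d : ℕ) (fm fn : EuclideanSpace ℝ (Fin d) → ℝ)
    (μ : ℝ) (hμ : 0 < μ)
    (vm vn : EuclideanSpace ℝ (Fin d) → EuclideanSpace ℝ (Fin d))
    (hvm : ∀ w u, fm (vm w) + ‖vm w - w‖ ^ 2 / (2 * μ) ≤ fm u + ‖u - w‖ ^ 2 / (2 * μ))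
    (hvn : ∀ w u, fn (vn w) + ‖vn w - w‖ ^ 2 / (2 * μ) ≤ fn u + ‖u - w‖ ^ 2 / (2 * μ))
    {Ω : Type*} [MeasurableSpace Ω] (P : Measure Ω) [IsProbabilityMeasure P]
    (ε : ℝ) (hε : 0 < ε)
    (W V : Ω → EuclideanSpace ℝ (Fin d))
    (hint1 : Integrable (fun ω => ‖μ⁻¹ • (vm (W ω) - vn (W ω))‖ ^ 2) P)
    (hint2 : Integrable (fun ω => ‖V ω - vn (W ω)‖ ^ 2) P)
    (hgrad : ∫ ω, ‖μ⁻¹ • (vm (W ω) - vn (W ω))‖ ^ 2 ∂P ≤ min 1 ((μ ^ 2)⁻¹) * ε ^ 2 / 4)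
    (hclose : ∫ ω, ‖V ω - vn (W ω)‖ ^ 2 ∂P ≤ ε ^ 2 / 4) :
    (∀ (ω : Ω) (u : EuclideanSpace ℝ (Fin d)),
        fn u ≥ fn (vn (W ω)) + ⟪μ⁻¹ • (W ω - vn (W ω)), u - vn (W ω)⟫
            - (2 * μ)⁻¹ * ‖u - vn (W ω)‖ ^ 2
      ∧ fm u ≥ fm (vm (W ω)) + ⟪μ⁻¹ • (W ω - vm (W ω)), u - vm (W ω)⟫
            - (2 * μ)⁻¹ * ‖u - vm (W ω)‖ ^ 2) ∧
    (∫ ω, ‖μ⁻¹ • (W ω - vn (W ω)) - μ⁻¹ • (W ω - vm (W ω))‖ ∂P ≤ ε) ∧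
    (∫ ω, ‖V ω - vn (W ω)‖ ∂P ≤ ε) ∧
    (∫ ω, ‖V ω - vm (W ω)‖ ∂P ≤ ε) := by
  set g : Ω → ℝ := fun ω => ‖μ⁻¹ • (vm (W ω) - vn (W ω))‖
  set h : Ω → ℝ := fun ω => ‖V ω - vn (W ω)‖
  have hg : MemLp g 2 P := memLp_two_of_nonneg_of_integrable_sq (fun _ => norm_nonneg _) hint1
  have hh : MemLp h 2 P := memLp_two_of_nonneg_of_integrable_sq (fun _ => norm_nonneg _) hint2
  obtain ⟨hgrad_half, hgrad_div⟩ := le_sq_of_le_min_one_inv_sq_mul hgrad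
  have hg_half : ∫ ω, g ω ∂P ≤ ε / 2 :=
    integral_le_of_integral_sq_le hg (by positivity) hgrad_half
  have hg_div : ∫ ω, g ω ∂P ≤ ε / (2 * μ) :=
    integral_le_of_integral_sq_le hg (by positivity) hgrad_div
  have hh_half : ∫ ω, h ω ∂P ≤ ε / 2 :=
    integral_le_of_integral_sq_le hh (by positivity) (hclose.trans_eq (by ring))
  have hξ : ∀ ω, ‖μ⁻¹ • (W ω - vn (W ω)) - μ⁻¹ • (W ω - vm (W ω))‖ = g ω := fun ω => by
    rw [← smul_sub, sub_sub_sub_cancel_left]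
  have htri : ∀ ω, ‖V ω - vm (W ω)‖ ≤ h ω + μ * g ω := fun ω => by
    have hscale : μ * g ω = ‖vn (W ω) - vm (W ω)‖ := by
      simp only [g]
      rw [norm_smul, norm_inv, Real.norm_of_nonneg hμ.le, mul_inv_cancel_left₀ hμ.ne', norm_sub_rev]
    rw [hscale]
    exact norm_sub_le_norm_sub_add_norm_sub _ _ _
  refine ⟨fun ω u => ⟨IsProxPoint.subgradient_ineq (hvn (W ω)) u,
    IsProxPoint.subgradient_ineq (hvm (W ω)) u⟩,
    ?_, by linarith, ?_⟩
  · simp only [hξ]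
    linarith
  · calc ∫ ω, ‖V ω - vm (W ω)‖ ∂P ≤ ∫ ω, h ω ∂P + μ * ∫ ω, g ω ∂P :=
          integral_le_add_const_mul_of_le (hh.integrable one_le_two) (hg.integrable one_le_two)
            (fun _ => norm_nonneg _) μ htri
      _ ≤ ε / 2 + μ * (ε / (2 * μ)) := by gcongr
      _ = ε := by field_simp; ring

/-- Let `f^m, f^n : ℝ^d → ℝ` be continuous and `ρ`-weakly convex, `0 < μ < 1/ρ` (encoded as
`0 < μ` and `μρ < 1`), with proximal points `vm w = v_{μf^m}(w)`, `vn w = v_{μf^n}(w)`, so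
that `∇F^μ(w) = μ⁻¹(vm w − vn w)`.  Let `W, V̄ : Ω → ℝ^d` be random vectors on a probability
space `(Ω, P)` with `E‖∇F^μ(W)‖² ≤ min{1, μ⁻²}ε²/4` and `E‖V̄ − vn(W)‖² ≤ ε²/4`.  Writing
`w′ = vn(W)`, `w″ = vm(W)`, `ξ_n = μ⁻¹(W − w′)`, `ξ_m = μ⁻¹(W − w″)`, `ξ = ξ_n − ξ_m`, then:
(i) for every `ω` and `u`, `ξ_n(ω)` (resp. `ξ_m(ω)`) satisfies the Fréchet-subgradient
inequality for `f^n` at `w′(ω)` (resp. `f^m` at `w″(ω)`); and (ii) `E‖ξ‖ ≤ ε`,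
`E‖V̄ − w′‖ ≤ ε`, `E‖V̄ − w″‖ ≤ ε`, i.e. `V̄` is a nearly `ε`-critical point in expectation. -/
theorem stmt7 (d : ℕ) (fm fn : EuclideanSpace ℝ (Fin d) → ℝ) (ρ : ℝ) (hρ : 0 ≤ ρ)
    (hcm : Continuous fm) (hcn : Continuous fn)
    (hwm : ConvexOn ℝ Set.univ (fun w => fm w + ρ / 2 * ‖w‖ ^ 2))
    (hwn : ConvexOn ℝ Set.univ (fun w => fn w + ρ / 2 * ‖w‖ ^ 2))
    (μ : ℝ) (hμ : 0 < μ) (hμρ : μ * ρ < 1)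
    (vm vn : EuclideanSpace ℝ (Fin d) → EuclideanSpace ℝ (Fin d))
    (hvm : ∀ w u, fm (vm w) + ‖vm w - w‖ ^ 2 / (2 * μ) ≤ fm u + ‖u - w‖ ^ 2 / (2 * μ))
    (hvn : ∀ w u, fn (vn w) + ‖vn w - w‖ ^ 2 / (2 * μ) ≤ fn u + ‖u - w‖ ^ 2 / (2 * μ))
    {Ω : Type*} [MeasurableSpace Ω] (P : Measure Ω) [IsProbabilityMeasure P]
    (ε : ℝ) (hε : 0 < ε)
    (W V : Ω → EuclideanSpace ℝ (Fin d)) (hWmeas : Measurable W) (hVmeas : Measurable V)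
    (hint1 : Integrable (fun ω => ‖μ⁻¹ • (vm (W ω) - vn (W ω))‖ ^ 2) P)
    (hint2 : Integrable (fun ω => ‖V ω - vn (W ω)‖ ^ 2) P)
    (hgrad : ∫ ω, ‖μ⁻¹ • (vm (W ω) - vn (W ω))‖ ^ 2 ∂P ≤ min 1 ((μ ^ 2)⁻¹) * ε ^ 2 / 4)
    (hclose : ∫ ω, ‖V ω - vn (W ω)‖ ^ 2 ∂P ≤ ε ^ 2 / 4) :
    (∀ (ω : Ω) (u : EuclideanSpace ℝ (Fin d)),
        fn u ≥ fn (vn (W ω)) + ⟪μ⁻¹ • (W ω - vn (W ω)), u - vn (W ω)⟫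
            - (2 * μ)⁻¹ * ‖u - vn (W ω)‖ ^ 2
      ∧ fm u ≥ fm (vm (W ω)) + ⟪μ⁻¹ • (W ω - vm (W ω)), u - vm (W ω)⟫
            - (2 * μ)⁻¹ * ‖u - vm (W ω)‖ ^ 2) ∧
    (∫ ω, ‖μ⁻¹ • (W ω - vn (W ω)) - μ⁻¹ • (W ω - vm (W ω))‖ ∂P ≤ ε) ∧
    (∫ ω, ‖V ω - vn (W ω)‖ ∂P ≤ ε) ∧
    (∫ ω, ‖V ω - vm (W ω)‖ ∂P ≤ ε) :=
  stmt7_general d fm fn μ hμ vm vn hvm hvn P ε hε W V hint1 hint2 hgrad hclose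
end

section
/- Let f^m, f^n : ℝ^d → ℝ be continuous and ρ-weakly convex, let 0 < μ < 1/ρ, and define F = f^n − f^m and F^μ = f^n_μ − f^m_μ, where f_μ denotes the Moreau envelope. Then for every w ∈ ℝ^d, F(v_{μf^n}(w)) ≤ F^μ(w) ≤ F(v_{μf^m}(w)). -/
/-- Let `f^m, f^n : ℝ^d → ℝ` be continuous and `ρ`-weakly convex, `0 < μ < 1/ρ` (encoded as
`0 < μ` and `μρ < 1`), with proximal points `vm w`, `vn w`.  With `F = f^n − f^m` and
`F^μ(w) = f^n_μ(w) − f^m_μ(w)` (difference of Moreau envelopes), one has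
`F(vn w) ≤ F^μ(w) ≤ F(vm w)` for every `w`. -/
theorem stmt8 (d : ℕ) (fm fn : EuclideanSpace ℝ (Fin d) → ℝ) (ρ : ℝ) (hρ : 0 ≤ ρ)
    (hcm : Continuous fm) (hcn : Continuous fn)
    (hwm : ConvexOn ℝ Set.univ (fun w => fm w + ρ / 2 * ‖w‖ ^ 2))
    (hwn : ConvexOn ℝ Set.univ (fun w => fn w + ρ / 2 * ‖w‖ ^ 2))
    (μ : ℝ) (hμ : 0 < μ) (hμρ : μ * ρ < 1)
    (vm vn : EuclideanSpace ℝ (Fin d) → EuclideanSpace ℝ (Fin d))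
    (hvm : ∀ w u, fm (vm w) + ‖vm w - w‖ ^ 2 / (2 * μ) ≤ fm u + ‖u - w‖ ^ 2 / (2 * μ))
    (hvn : ∀ w u, fn (vn w) + ‖vn w - w‖ ^ 2 / (2 * μ) ≤ fn u + ‖u - w‖ ^ 2 / (2 * μ))
    (w : EuclideanSpace ℝ (Fin d)) :
    fn (vn w) - fm (vn w)
      ≤ (fn (vn w) + ‖vn w - w‖ ^ 2 / (2 * μ)) - (fm (vm w) + ‖vm w - w‖ ^ 2 / (2 * μ)) ∧
    (fn (vn w) + ‖vn w - w‖ ^ 2 / (2 * μ)) - (fm (vm w) + ‖vm w - w‖ ^ 2 / (2 * μ))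
      ≤ fn (vm w) - fm (vm w) := by
  constructor
  · have h := hvm w (vn w); linarith
  · have h := hvn w (vm w); linarith
end

section
/- Let f^m, f^n : ℝ^d → ℝ be continuous and ρ-weakly convex, let 0 < μ < 1/ρ, set L_μ = 2/(μ − μ²ρ) and F^μ = f^n_μ − f^m_μ. Let w, v̄_m, v̄_n ∈ ℝ^d, let γ > 0 satisfy γL_μ ≤ 1/4, and set w⁺ = w − γμ⁻¹(v̄_m − v̄_n). Then, writing v*_m = v_{μf^m}(w) and v*_n = v_{μf^n}(w), one has F^μ(w) − F^μ(w⁺) ≥ (γ/(4μ²))‖v*_m − v*_n‖² − (3γ/(2μ²))‖(v̄_m − v̄_n) − (v*_m − v*_n)‖². -/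
open RealInnerProductSpace

lemma par_aux {d : ℕ} (a b : EuclideanSpace ℝ (Fin d)) :
    ‖(1/2:ℝ) • a + (1/2:ℝ) • b‖ ^ 2 = 1/2*‖a‖^2 + 1/2*‖b‖^2 - 1/4*‖a - b‖^2 := by
  have h : (1/2:ℝ) • a + (1/2:ℝ) • b = (1/2:ℝ) • (a + b) := by module
  rw [h, norm_smul]
  have hp := parallelogram_law_with_norm ℝ a b
  have h2 : ‖(1/2:ℝ)‖ = 1/2 := by norm_num [Real.norm_eq_abs]
  rw [h2]
  nlinarith [hp]

lemma expand_aux {d : ℕ} (x y : EuclideanSpace ℝ (Fin d)) (t : ℝ) :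
    ‖x + t • y‖^2 = ‖x‖^2 + 2*t*⟪x, y⟫ + t^2*‖y‖^2 := by
  rw [@norm_add_sq_real, real_inner_smul_right, norm_smul, Real.norm_eq_abs, mul_pow, sq_abs]
  ring

lemma qg_aux {d : ℕ} (f : EuclideanSpace ℝ (Fin d) → ℝ) (ρ μ : ℝ) (hμ : 0 < μ)
    (hw : ConvexOn ℝ Set.univ (fun w => f w + ρ / 2 * ‖w‖ ^ 2))
    (v : EuclideanSpace ℝ (Fin d) → EuclideanSpace ℝ (Fin d))
    (hv : ∀ w u, f (v w) + ‖v w - w‖ ^ 2 / (2 * μ) ≤ f u + ‖u - w‖ ^ 2 / (2 * μ))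
    (w u : EuclideanSpace ℝ (Fin d)) :
    f (v w) + ‖v w - w‖ ^ 2 / (2 * μ) + (1/μ - ρ)/4 * ‖u - v w‖ ^ 2
      ≤ f u + ‖u - w‖ ^ 2 / (2 * μ) := by
  set m := (1/2 : ℝ) • v w + (1/2 : ℝ) • u with hm
  have hconv := hw.2 (Set.mem_univ (v w)) (Set.mem_univ u)
    (by norm_num : (0:ℝ) ≤ 1/2) (by norm_num : (0:ℝ) ≤ 1/2) (by norm_num : (1/2:ℝ)+(1/2) = 1)
  simp only [smul_eq_mul] at hconv
  have hmin := hv w m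
  have e1 : ‖m‖^2 = 1/2*‖v w‖^2 + 1/2*‖u‖^2 - 1/4*‖v w - u‖^2 := par_aux _ _
  have hmw : m - w = (1/2:ℝ) • (v w - w) + (1/2:ℝ) • (u - w) := by
    rw [hm]; module
  have e2 : ‖m - w‖^2 = 1/2*‖v w - w‖^2 + 1/2*‖u - w‖^2 - 1/4*‖v w - u‖^2 := by
    rw [hmw, par_aux]
    have : (v w - w) - (u - w) = v w - u := by abel
    rw [this]
  rw [e2] at hmin
  rw [e1] at hconv
  have hinv : 0 < μ⁻¹ := by positivity
  -- hmin : f (v w) + A/(2μ) ≤ f m + (A/2 + B/2 - C/4)/(2μ)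
  -- hconv : f m + ρ/2*(P/2+Q/2-C/4) ≤ 1/2*(f (v w) + ρ/2*P) + 1/2*(f u + ρ/2*Q)
  have hA : ‖v w - w‖^2/(2*μ) = 1/2 * μ⁻¹ * ‖v w - w‖^2 := by field_simp
  have hB : ‖u - w‖^2/(2*μ) = 1/2 * μ⁻¹ * ‖u - w‖^2 := by field_simp
  have hM : (1/2*‖v w - w‖^2 + 1/2*‖u - w‖^2 - 1/4*‖v w - u‖^2)/(2*μ)
      = 1/4 * μ⁻¹ * ‖v w - w‖^2 + 1/4 * μ⁻¹ * ‖u - w‖^2 - 1/8 * μ⁻¹ * ‖v w - u‖^2 := by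
    field_simp; ring
  have hC : ‖u - v w‖^2 = ‖v w - u‖^2 := by rw [norm_sub_rev]
  rw [hA, hM] at hmin
  rw [← hm] at hconv
  rw [hA, hB, hC]
  have h1μ : (1/μ - ρ)/4 * ‖v w - u‖^2 = 1/4 * μ⁻¹ * ‖v w - u‖^2 - ρ/4 * ‖v w - u‖^2 := by
    field_simp
  rw [h1μ]
  linarith [hmin, hconv]

set_option maxHeartbeats 1000000 in
/-- Descent inequality for one approximate-gradient step on `F^μ = f^n_μ − f^m_μ`.
Here `f^m, f^n` are continuous and `ρ`-weakly convex, `0 < μ < 1/ρ` (encoded as `0 < μ`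
and `μρ < 1`), `vm, vn` are the proximal mappings, `Fμ` is the difference of Moreau
envelopes, `Lμ = 2/(μ − μ²ρ)`, `γ > 0` with `γLμ ≤ 1/4`, and
`w⁺ = w − γμ⁻¹(v̄m − v̄n)`.  Then
`Fμ(w) − Fμ(w⁺) ≥ (γ/(4μ²))‖vm w − vn w‖² − (3γ/(2μ²))‖(v̄m − v̄n) − (vm w − vn w)‖²`. -/
theorem stmt9 (d : ℕ) (fm fn : EuclideanSpace ℝ (Fin d) → ℝ) (ρ : ℝ) (hρ : 0 ≤ ρ)
    (hcm : Continuous fm) (hcn : Continuous fn)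
    (hwm : ConvexOn ℝ Set.univ (fun w => fm w + ρ / 2 * ‖w‖ ^ 2))
    (hwn : ConvexOn ℝ Set.univ (fun w => fn w + ρ / 2 * ‖w‖ ^ 2))
    (μ : ℝ) (hμ : 0 < μ) (hμρ : μ * ρ < 1)
    (vm vn : EuclideanSpace ℝ (Fin d) → EuclideanSpace ℝ (Fin d))
    (hvm : ∀ w u, fm (vm w) + ‖vm w - w‖ ^ 2 / (2 * μ) ≤ fm u + ‖u - w‖ ^ 2 / (2 * μ))
    (hvn : ∀ w u, fn (vn w) + ‖vn w - w‖ ^ 2 / (2 * μ) ≤ fn u + ‖u - w‖ ^ 2 / (2 * μ))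
    (Fμ : EuclideanSpace ℝ (Fin d) → ℝ)
    (hF : ∀ w, Fμ w = (fn (vn w) + ‖vn w - w‖ ^ 2 / (2 * μ))
        - (fm (vm w) + ‖vm w - w‖ ^ 2 / (2 * μ)))
    (w vbm vbn : EuclideanSpace ℝ (Fin d))
    (γ : ℝ) (hγ : 0 < γ) (hγL : γ * (2 / (μ - μ ^ 2 * ρ)) ≤ 1 / 4) :
    Fμ w - Fμ (w - (γ * μ⁻¹) • (vbm - vbn))
      ≥ (γ / (4 * μ ^ 2)) * ‖vm w - vn w‖ ^ 2
        - (3 * γ / (2 * μ ^ 2)) * ‖(vbm - vbn) - (vm w - vn w)‖ ^ 2 := by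
  set g : EuclideanSpace ℝ (Fin d) := vbm - vbn with hg
  set w' : EuclideanSpace ℝ (Fin d) := w - (γ * μ⁻¹) • g with hw'
  set gs : EuclideanSpace ℝ (Fin d) := vm w - vn w with hgs
  set c : EuclideanSpace ℝ (Fin d) := vm w' - vm w with hc
  set ee : EuclideanSpace ℝ (Fin d) := g - gs with hee
  obtain ⟨s, hs⟩ : ∃ s : ℝ, s = 1/μ - ρ := ⟨_, rfl⟩
  have hspos : 0 < s := by
    rw [hs]
    have : ρ < 1/μ := by rw [lt_div_iff₀ hμ]; linarith [hμρ]
    linarith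
  have hμ2 : (0:ℝ) < μ^2 := by positivity
  -- step bound: γ/(s μ²) ≤ 1/8
  have hdenom : μ - μ^2*ρ = μ^2 * s := by rw [hs]; field_simp
  have h8 : γ / (s*μ^2) ≤ 1/8 := by
    have hpos : 0 < μ - μ^2*ρ := by rw [hdenom]; positivity
    have h1 : γ * 2 / (μ - μ^2*ρ) ≤ 1/4 := by rw [mul_div_assoc]; exact hγL
    rw [div_le_iff₀ hpos] at h1
    rw [div_le_iff₀ (by positivity : (0:ℝ) < s*μ^2)]
    linarith [h1, hdenom, hdenom ▸ hpos]
  -- A part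
  have hA := hvn w' (vn w)
  -- B part (quadratic growth)
  have hB := qg_aux fm ρ μ hμ hwm vm hvm w (vm w')
  rw [← hs, ← hc] at hB
  -- norm expansions
  have hvn1 : vn w - w' = (vn w - w) + (γ * μ⁻¹) • g := by rw [hw']; module
  have hvm1 : vm w' - w' = (vm w' - w) + (γ * μ⁻¹) • g := by rw [hw']; module
  have en : ‖vn w - w'‖^2
      = ‖vn w - w‖^2 + 2*(γ*μ⁻¹)*⟪vn w - w, g⟫ + (γ*μ⁻¹)^2*‖g‖^2 := by
    rw [hvn1, expand_aux]
  have em : ‖vm w' - w'‖^2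
      = ‖vm w' - w‖^2 + 2*(γ*μ⁻¹)*⟪vm w' - w, g⟫ + (γ*μ⁻¹)^2*‖g‖^2 := by
    rw [hvm1, expand_aux]
  have hinner : ⟪vm w' - w, g⟫ - ⟪vn w - w, g⟫ = ⟪gs, g⟫ + ⟪c, g⟫ := by
    rw [← inner_sub_left, ← inner_add_left]
    congr 1
    rw [hgs, hc]; abel
  have ebr : ‖vn w - w‖^2/(2*μ) - ‖vn w - w'‖^2/(2*μ)
      + ‖vm w' - w'‖^2/(2*μ) - ‖vm w' - w‖^2/(2*μ)
      = (γ/μ^2)*⟪gs, g⟫ + (γ/μ^2)*⟪c, g⟫ := by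
    rw [en, em]
    linear_combination (γ/μ^2) * hinner
  have main1 : Fμ w - Fμ w' ≥ (γ/μ^2)*⟪gs, g⟫ + (γ/μ^2)*⟪c, g⟫ + s/4*‖c‖^2 := by
    rw [hF w, hF w']
    linarith [hA, hB, ebr]
  -- complete the square
  have hcs : s/4*‖c‖^2 + (γ/μ^2)*⟪c, g⟫ + γ^2/(s*μ^4)*‖g‖^2 ≥ 0 := by
    have h0 : (0:ℝ) ≤ s/4 * (‖c‖^2 + 2*(2*γ/(s*μ^2))*⟪c, g⟫ + (2*γ/(s*μ^2))^2*‖g‖^2) := by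
      rw [← expand_aux]
      positivity
    have heq : s/4 * (‖c‖^2 + 2*(2*γ/(s*μ^2))*⟪c, g⟫ + (2*γ/(s*μ^2))^2*‖g‖^2)
        = s/4*‖c‖^2 + (γ/μ^2)*⟪c, g⟫ + γ^2/(s*μ^4)*‖g‖^2 := by
      field_simp
      ring
    linarith [h0, heq.symm.le, heq.le]
  have hgdecomp : g = gs + ee := by rw [hee]; abel
  have hip : ⟪gs, g⟫ ≥ 1/2*‖gs‖^2 - 1/2*‖ee‖^2 := by
    have h2 : ⟪gs, g⟫ = ‖gs‖^2 + ⟪gs, ee⟫ := by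
      rw [hgdecomp, inner_add_right, real_inner_self_eq_norm_sq]
    have h3 : (0:ℝ) ≤ ‖gs + ee‖^2 := by positivity
    rw [@norm_add_sq_real] at h3
    linarith
  have hGsq : ‖g‖^2 ≤ 2*‖gs‖^2 + 2*‖ee‖^2 := by
    have h3 : (0:ℝ) ≤ ‖gs - ee‖^2 := by positivity
    rw [@norm_sub_sq_real] at h3
    rw [hgdecomp, @norm_add_sq_real]
    linarith
  have hprod : γ^2/(s*μ^4)*‖g‖^2 ≤ γ/μ^2*((1/8)*(2*‖gs‖^2+2*‖ee‖^2)) := by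
    have e : γ^2/(s*μ^4)*‖g‖^2 = (γ/μ^2) * ((γ/(s*μ^2))*‖g‖^2) := by
      field_simp
    have h2 : (γ/(s*μ^2))*‖g‖^2 ≤ (1/8)*(2*‖gs‖^2+2*‖ee‖^2) := by
      have h4 := mul_le_mul_of_nonneg_right h8 (by positivity : (0:ℝ) ≤ ‖g‖^2)
      linarith [h4, hGsq]
    rw [e]
    exact mul_le_mul_of_nonneg_left h2 (by positivity)
  have main3 : (γ/μ^2)*⟪gs, g⟫ ≥ (γ/μ^2)*(1/2*‖gs‖^2 - 1/2*‖ee‖^2) :=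
    mul_le_mul_of_nonneg_left hip (by positivity)
  have hnn : (0:ℝ) ≤ (γ/μ^2)*‖ee‖^2 := by positivity
  have e1 : γ/(4*μ^2)*‖gs‖^2 = γ/μ^2*(1/4*‖gs‖^2) := by ring
  have e2 : 3*γ/(2*μ^2)*‖ee‖^2 = γ/μ^2*(3/2*‖ee‖^2) := by ring
  rw [ge_iff_le, e1, e2]
  linarith [main1, hcs, main3, hprod, hnn]
end

section
/- Let d, N₊, N₋ be positive integers, L ≥ 0, and for each i ∈ {1,…,N₊}, j ∈ {1,…,N₋} let s_{ij} : ℝ^d → ℝ be differentiable with L-Lipschitz gradient. Set ρ = N₊N₋L, let 0 ≤ l ≤ N₋ be an integer, and let μ > 0 satisfy μ⁻¹ > ρ. Then for every w ∈ ℝ^d the function (v, λ) ↦ g^l(v, λ) + ‖v − w‖²/(2μ) is jointly convex on ℝ^d × ℝ^{N₊}. -/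
/-!
A function with `L`-Lipschitz gradient becomes convex after adding `L/2 ‖v - w‖²`, because its
gradient then becomes monotone. Hence each hinge `[s_{ij}(v) - λ_i]₊ + L/2 ‖v - w‖²` is convex,
being the maximum of `s_{ij}(v) + L/2 ‖v - w‖² - λ_i` and `L/2 ‖v - w‖²`. The `N₊N₋` hinges use up
`N₊N₋L/2 < 1/(2μ)` of the quadratic term; what is left is a nonnegative multiple of a convex
quadratic, and `l ∑ λ_i` is linear.
-/

open Set

theorem convexOn_finset_sum {𝕜 E β ι : Type*} [Semiring 𝕜] [PartialOrder 𝕜] [AddCommMonoid E]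
    [SMul 𝕜 E] [AddCommMonoid β] [PartialOrder β] [IsOrderedAddMonoid β] [Module 𝕜 β]
    {s : Set E} (hs : Convex 𝕜 s) (t : Finset ι) {f : ι → E → β}
    (hf : ∀ i ∈ t, ConvexOn 𝕜 s (f i)) : ConvexOn 𝕜 s fun x ↦ ∑ i ∈ t, f i x := by
  simpa only [← Finset.sum_apply] using
    Finset.sum_induction f (ConvexOn 𝕜 s) (fun _ _ ↦ .add) (convexOn_const 0 hs) hf

theorem convexOn_univ_of_hasFDerivAt_of_monotone {E : Type*} [NormedAddCommGroup E]
    [NormedSpace ℝ E] {f : E → ℝ} {f' : E → E →L[ℝ] ℝ} (hf : ∀ x, HasFDerivAt f (f' x) x)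
    (hmono : ∀ x y, 0 ≤ (f' x - f' y) (x - y)) : ConvexOn ℝ univ f := by
  refine ⟨convex_univ, fun x _ y _ a b ha hb hab ↦ ?_⟩
  let ψ : ℝ → ℝ := f ∘ AffineMap.lineMap x y
  have hψ : ∀ t, HasDerivAt ψ (f' (AffineMap.lineMap x y t) (y - x)) t := fun t ↦
    (hf _).comp_hasDerivAt t AffineMap.hasDerivAt_lineMap
  have hψ_mono : Monotone (deriv ψ) := by
    intro t u htu
    simp only [(hψ _).deriv]
    rcases htu.eq_or_lt with rfl | htu
    · rfl
    have h := hmono (AffineMap.lineMap x y u) (AffineMap.lineMap x y t)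
    have hsub : AffineMap.lineMap x y u - AffineMap.lineMap x y t = (u - t) • (y - x) := by
      simp only [AffineMap.lineMap_apply_module]
      module
    rw [hsub, map_smul, smul_eq_mul, sub_apply] at h
    exact sub_nonneg.1 (nonneg_of_mul_nonneg_right h (sub_pos.2 htu))
  have := (hψ_mono.convexOn_univ_of_deriv fun t ↦ (hψ t).differentiableAt).2
    (mem_univ 0) (mem_univ 1) ha hb hab
  obtain rfl := eq_sub_of_add_eq hab
  simpa [ψ, AffineMap.lineMap_apply_module] using this

theorem convexOn_univ_norm_sub_sq {E : Type*} [SeminormedAddCommGroup E] [NormedSpace ℝ E]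
    (w : E) : ConvexOn ℝ univ fun v ↦ ‖v - w‖ ^ 2 :=
  ((convexOn_univ_dist w).pow (fun _ _ ↦ dist_nonneg) 2).congr fun v _ ↦ by
    simp [dist_eq_norm]

theorem ConvexOn.max_zero_add {V : Type*} [AddCommMonoid V] [SMul ℝ V] {s : Set V}
    {f q : V → ℝ} (hfq : ConvexOn ℝ s (f + q)) (hq : ConvexOn ℝ s q) :
    ConvexOn ℝ s fun x ↦ max (f x) 0 + q x :=
  (hfq.sup hq).congr fun x _ ↦ by
    change max (f x + q x) (q x) = _
    rw [← max_add_add_right, zero_add]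

section InnerProductSpace

variable {E : Type*} [NormedAddCommGroup E] [InnerProductSpace ℝ E] [CompleteSpace E]

theorem convexOn_univ_add_half_mul_norm_sub_sq {f : E → ℝ} {g : E → E} {L : ℝ}
    (hf : ∀ x, HasGradientAt f (g x) x) (hg : ∀ x y, ‖g x - g y‖ ≤ L * ‖x - y‖) (w : E) :
    ConvexOn ℝ univ fun v ↦ f v + L / 2 * ‖v - w‖ ^ 2 := by
  refine convexOn_univ_of_hasFDerivAt_of_monotone (fun x ↦ (hf x).hasFDerivAt.add
    (((hasFDerivAt_id x).sub_const w).norm_sq.const_mul (L / 2))) fun x y ↦ ?_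
  have key : 0 ≤ inner ℝ (g x - g y) (x - y) + L * inner ℝ (x - y) (x - y) := by
    have hcs := (abs_real_inner_le_norm (g x - g y) (x - y)).trans
      (mul_le_mul_of_nonneg_right (hg x y) (norm_nonneg _))
    rw [real_inner_self_eq_norm_sq]
    linarith [neg_abs_le (inner ℝ (g x - g y) (x - y))]
  simp only [inner_sub_left, inner_sub_right] at key
  simp only [id_eq, map_sub, ContinuousLinearMap.comp_id, sub_apply, add_apply,
    InnerProductSpace.toDual_apply_apply, smul_apply, coe_innerSL_apply, nsmul_eq_mul,
    Nat.cast_ofNat, smul_eq_mul, sub_nonneg]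
  linarith

theorem convexOn_univ_max_sub_zero_add_half_mul_norm_sub_sq {ι : Type*} {f : E → ℝ} {g : E → E}
    {L : ℝ} (hf : ∀ x, HasGradientAt f (g x) x) (hg : ∀ x y, ‖g x - g y‖ ≤ L * ‖x - y‖)
    (hL : 0 ≤ L) (w : E) (i : ι) :
    ConvexOn ℝ univ fun p : E × (ι → ℝ) ↦ max (f p.1 - p.2 i) 0 + L / 2 * ‖p.1 - w‖ ^ 2 := by
  have hq := ((convexOn_univ_norm_sub_sq w).smul (div_nonneg hL zero_le_two)).comp_linearMap
    (LinearMap.fst ℝ E (ι → ℝ))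
  have hφ := ((convexOn_univ_add_half_mul_norm_sub_sq hf hg w).comp_linearMap
    (LinearMap.fst ℝ E (ι → ℝ))).add
    ((-(LinearMap.proj i ∘ₗ LinearMap.snd ℝ E (ι → ℝ))).convexOn convex_univ)
  refine ConvexOn.max_zero_add (f := fun p : E × (ι → ℝ) ↦ f p.1 - p.2 i)
    (hφ.congr fun p _ ↦ ?_) (hq.congr fun p _ ↦ ?_)
  · simp only [LinearMap.coe_fst, LinearMap.coe_neg, LinearMap.coe_comp, LinearMap.coe_proj,
      LinearMap.coe_snd, Pi.add_apply, Function.comp_apply, Pi.neg_apply, Function.eval]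
    ring
  · simp

end InnerProductSpace

theorem stmt10_general (d Np Nm : ℕ)
    (L : ℝ) (hL : 0 ≤ L)
    (s : Fin Np → Fin Nm → EuclideanSpace ℝ (Fin d) → ℝ)
    (grad : Fin Np → Fin Nm → EuclideanSpace ℝ (Fin d) → EuclideanSpace ℝ (Fin d))
    (hdiff : ∀ i j w, HasGradientAt (s i j) (grad i j w) w)
    (hlip : ∀ (i : Fin Np) (j : Fin Nm) (w v : EuclideanSpace ℝ (Fin d)),
      ‖grad i j w - grad i j v‖ ≤ L * ‖w - v‖)
    (l : ℕ)
    (μ : ℝ) (hμρ : (Np : ℝ) * Nm * L < μ⁻¹)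
    (w : EuclideanSpace ℝ (Fin d)) :
    ConvexOn ℝ Set.univ
      (fun p : EuclideanSpace ℝ (Fin d) × (Fin Np → ℝ) =>
        ((l : ℝ) * ∑ i, p.2 i + ∑ i, ∑ j, max (s i j p.1 - p.2 i) 0)
          + ‖p.1 - w‖ ^ 2 / (2 * μ)) := by
  let E := EuclideanSpace ℝ (Fin d)
  have hinge : ConvexOn ℝ univ fun p : E × (Fin Np → ℝ) ↦
      ∑ i, ∑ j, (max (s i j p.1 - p.2 i) 0 + L / 2 * ‖p.1 - w‖ ^ 2) :=
    convexOn_finset_sum convex_univ _ fun i _ ↦ convexOn_finset_sum convex_univ _ fun j _ ↦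
      convexOn_univ_max_sub_zero_add_half_mul_norm_sub_sq (hdiff i j) (hlip i j) hL w i
  have hlin : ConvexOn ℝ univ fun p : E × (Fin Np → ℝ) ↦ (l : ℝ) * ∑ i, p.2 i := by
    refine (((l : ℝ) • ∑ i, LinearMap.proj i ∘ₗ LinearMap.snd ℝ E (Fin Np → ℝ)).convexOn
      convex_univ).congr fun p _ ↦ ?_
    simp
  have hc : 0 ≤ (2 * μ)⁻¹ - Np * Nm * L / 2 := by
    rw [mul_inv]
    linarith
  have hq :=
    ((convexOn_univ_norm_sub_sq w).smul hc).comp_linearMap (LinearMap.fst ℝ E (Fin Np → ℝ))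
  refine ((hinge.add hlin).add hq).congr fun p _ ↦ ?_
  simp only [Finset.sum_add_distrib, Finset.sum_const, Finset.card_univ, Fintype.card_fin,
    nsmul_eq_mul, smul_eq_mul, LinearMap.coe_fst, Pi.add_apply, Function.comp_apply]
  ring

/-- If each `s i j : ℝ^d → ℝ` is differentiable with `L`-Lipschitz gradient, `ρ = N₊N₋L`,
`0 ≤ l ≤ N₋`, and `μ > 0` satisfies `μ⁻¹ > ρ`, then for every `w` the function
`(v, λ) ↦ g^l(v, λ) + ‖v − w‖²/(2μ)`, where
`g^l(v, λ) = l·∑ᵢ λᵢ + ∑ᵢ∑ⱼ [s_{ij}(v) − λᵢ]₊`, is jointly convex on `ℝ^d × ℝ^{N₊}`. -/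
theorem stmt10 (d Np Nm : ℕ) (hd : 0 < d) (hNp : 0 < Np) (hNm : 0 < Nm)
    (L : ℝ) (hL : 0 ≤ L)
    (s : Fin Np → Fin Nm → EuclideanSpace ℝ (Fin d) → ℝ)
    (grad : Fin Np → Fin Nm → EuclideanSpace ℝ (Fin d) → EuclideanSpace ℝ (Fin d))
    (hdiff : ∀ i j w, HasGradientAt (s i j) (grad i j w) w)
    (hlip : ∀ (i : Fin Np) (j : Fin Nm) (w v : EuclideanSpace ℝ (Fin d)),
      ‖grad i j w - grad i j v‖ ≤ L * ‖w - v‖)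
    (l : ℕ) (hl : l ≤ Nm)
    (μ : ℝ) (hμ : 0 < μ) (hμρ : (Np : ℝ) * Nm * L < μ⁻¹)
    (w : EuclideanSpace ℝ (Fin d)) :
    ConvexOn ℝ Set.univ
      (fun p : EuclideanSpace ℝ (Fin d) × (Fin Np → ℝ) =>
        ((l : ℝ) * ∑ i, p.2 i + ∑ i, ∑ j, max (s i j p.1 - p.2 i) 0)
          + ‖p.1 - w‖ ^ 2 / (2 * μ)) :=
  stmt10_general d Np Nm L hL s grad hdiff hlip l μ hμρ w
end

section
/- Let s = (s₁,…,s_N) ∈ ℝ^N and let 1 ≤ l ≤ N−1 be an integer. Then the set of global minimizers of the function λ ↦ lλ + Σ_{j=1}^N [s_j − λ]₊ over λ ∈ ℝ is exactly the closed interval [s_{[l+1]}, s_{[l]}] between the (l+1)-th largest and the l-th largest entries of s. -/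
/-- Let `s ∈ ℝ^N` and let `σ` be a permutation sorting `s` in decreasing order, so that
`s(σ 0) ≥ s(σ 1) ≥ … ≥ s(σ (N−1))` and the `j`-th largest entry `s_{[j]}` is `s (σ (j−1))`.
For an integer `1 ≤ l ≤ N−1`, the set of global minimizers of
`λ ↦ lλ + ∑ⱼ [sⱼ − λ]₊` is exactly the closed interval `[s_{[l+1]}, s_{[l]}]`. -/
theorem stmt13 (N : ℕ) (s : Fin N → ℝ) (σ : Equiv.Perm (Fin N))
    (hσ : ∀ j k : Fin N, j ≤ k → s (σ k) ≤ s (σ j))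
    (l : ℕ) (hl1 : 1 ≤ l) (hl2 : l + 1 ≤ N) :
    {lam : ℝ | ∀ t : ℝ, (l : ℝ) * lam + ∑ j, max (s j - lam) 0
        ≤ (l : ℝ) * t + ∑ j, max (s j - t) 0}
      = Set.Icc (s (σ ⟨l, by omega⟩)) (s (σ ⟨l - 1, by omega⟩)) := by
  have hlN : l < N := by omega
  have hl1N : l - 1 < N := by omega
  set u : ℕ → ℝ := fun i => if h : i < N then s (σ ⟨i, h⟩) else 0 with hu
  have hua : s (σ ⟨l, by omega⟩) = u l := by simp [hu, hlN]
  have hub : s (σ ⟨l - 1, by omega⟩) = u (l - 1) := by simp [hu, hl1N]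
  have humono : ∀ i k : ℕ, i ≤ k → k < N → u k ≤ u i := by
    intro i k hik hkN
    have hiN : i < N := lt_of_le_of_lt hik hkN |>.trans_le (le_refl N)
    simp only [hu, dif_pos hkN, dif_pos hiN]
    exact hσ ⟨i, hiN⟩ ⟨k, hkN⟩ hik
  have hab : u l ≤ u (l - 1) := humono (l - 1) l (by omega) hlN
  have hsum : ∀ t : ℝ, ∑ j, max (s j - t) 0 = ∑ i ∈ Finset.range N, max (u i - t) 0 := by
    intro t
    rw [← Equiv.sum_comp σ (fun j => max (s j - t) 0),
        ← Fin.sum_univ_eq_sum_range (fun i => max (u i - t) 0) N]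
    refine Finset.sum_congr rfl fun j _ => ?_
    simp [hu, j.isLt]
  set C : ℝ := ∑ i ∈ Finset.range l, u i with hC
  have key : ∀ (k : ℕ) (t : ℝ), k ≤ N →
      (∑ i ∈ Finset.range k, u i) - (k : ℝ) * t ≤ ∑ i ∈ Finset.range N, max (u i - t) 0 := by
    intro k t hk
    have h1 : (∑ i ∈ Finset.range k, u i) - (k : ℝ) * t
        = ∑ i ∈ Finset.range k, (u i - t) := by
      rw [Finset.sum_sub_distrib, Finset.sum_const, Finset.card_range, nsmul_eq_mul]
    rw [h1]
    calc ∑ i ∈ Finset.range k, (u i - t)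
        ≤ ∑ i ∈ Finset.range k, max (u i - t) 0 :=
          Finset.sum_le_sum fun i _ => le_max_left _ _
      _ ≤ ∑ i ∈ Finset.range N, max (u i - t) 0 :=
          Finset.sum_le_sum_of_subset_of_nonneg (Finset.range_subset_range.2 hk)
            (fun i _ _ => le_max_right _ _)
  have lower : ∀ t : ℝ, C ≤ (l : ℝ) * t + ∑ j, max (s j - t) 0 := by
    intro t
    rw [hsum t]
    have := key l t hlN.le
    linarith
  have val : ∀ lam : ℝ, u l ≤ lam → lam ≤ u (l - 1) →
      (l : ℝ) * lam + ∑ j, max (s j - lam) 0 = C := by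
    intro lam h1 h2
    rw [hsum lam]
    have hsplit : ∑ i ∈ Finset.range N, max (u i - lam) 0
        = ∑ i ∈ Finset.range l, (u i - lam) := by
      rw [← Finset.sum_range_add_sum_Ico (fun i => max (u i - lam) 0) hlN.le]
      have h3 : ∑ i ∈ Finset.Ico l N, max (u i - lam) 0 = 0 := by
        refine Finset.sum_eq_zero fun i hi => ?_
        rw [Finset.mem_Ico] at hi
        have : u i ≤ u l := humono l i hi.1 hi.2
        have : u i - lam ≤ 0 := by linarith
        simp [max_eq_right this]
      rw [h3, add_zero]
      refine Finset.sum_congr rfl fun i hi => ?_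
      rw [Finset.mem_range] at hi
      have : u (l - 1) ≤ u i := humono i (l - 1) (by omega) hl1N
      exact max_eq_left (by linarith)
    rw [hsplit, Finset.sum_sub_distrib, Finset.sum_const, Finset.card_range, nsmul_eq_mul]
    ring
  have sum_succ_l : ∑ i ∈ Finset.range (l + 1), u i = C + u l := by
    rw [Finset.sum_range_succ]
  have sum_pred_l : C = (∑ i ∈ Finset.range (l - 1), u i) + u (l - 1) := by
    have h := Finset.sum_range_succ u (l - 1)
    rw [show l - 1 + 1 = l from by omega] at h
    rw [hC, h]
  ext lam
  simp only [Set.mem_setOf_eq, Set.mem_Icc, hua, hub]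
  constructor
  · intro hmin
    have hleC : (l : ℝ) * lam + ∑ j, max (s j - lam) 0 ≤ C := by
      have := hmin (u l)
      rw [val (u l) le_rfl hab] at this
      exact this
    constructor
    · by_contra h
      push_neg at h
      have hk := key (l + 1) lam hl2
      rw [sum_succ_l] at hk
      rw [hsum lam] at hleC
      push_cast at hk
      linarith
    · by_contra h
      push_neg at h
      have hk := key (l - 1) lam (by omega)
      have hcast : ((l - 1 : ℕ) : ℝ) = (l : ℝ) - 1 := by
        rw [Nat.cast_sub hl1]; norm_num
      rw [hcast] at hk
      rw [hsum lam] at hleC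
      have hC' := sum_pred_l
      linarith
  · rintro ⟨h1, h2⟩ t
    rw [val lam h1 h2]
    exact lower t
end

section
/- Let d, N₊, N₋ be positive integers, B ≥ 0, and for each i ∈ {1,…,N₊}, j ∈ {1,…,N₋} let s_{ij} : ℝ^d → ℝ be B-Lipschitz continuous. Let 1 ≤ l ≤ N₋−1 be an integer and let v* ∈ ℝ^d. For each i let Λ*_i ⊆ ℝ denote the set of minimizers of λ_i ↦ lλ_i + Σ_{j=1}^{N₋} [s_{ij}(v*) − λ_i]₊ (a nonempty closed interval), and let Λ* = Π_{i=1}^{N₊} Λ*_i ⊆ ℝ^{N₊}. Then for every v ∈ ℝ^d and λ = (λ₁,…,λ_{N₊}) ∈ ℝ^{N₊}: N₊N₋B‖v − v*‖ + g^l(v, λ) − min_{λ′∈ℝ^{N₊}} g^l(v*, λ′) ≥ Σ_{i=1}^{N₊} dist(λ_i, Λ*_i) ≥ dist(λ, Λ*), where dist(λ, Λ*) is the Euclidean distance in ℝ^{N₊} from λ to the set Λ*. -/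
/-!
For a fixed row `w`, the map `t ↦ l t + ∑ⱼ [wⱼ − t]₊` is piecewise linear with integer slopes
`l − #{j | t < wⱼ}`. Because `1 ≤ l ≤ N₋ − 1`, its minimizers form the interval between the
`(l+1)`-st and the `l`-th largest entry of `w`, and outside that interval the slope is at least `1`
in absolute value: the minimum is sharp, so the distance to the minimizer set is bounded by the
excess over the minimum. Summing over `i` gives the bound at `v*`; moving from `v*` to `v` costs at
most `N₊N₋B‖v − v*‖` by the Lipschitz bound, and the Euclidean distance to the product set is at
most the sum of the coordinate distances.
-/

open Finset Metric

section TopSum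

variable {ι : Type*} [Fintype ι]

/-- Its minimum over `t` is the sum of the `l` largest entries of `w`. -/
def topSumObjective (l : ℕ) (w : ι → ℝ) (t : ℝ) : ℝ := l * t + ∑ j, max (w j - t) 0

lemma mul_sub_le_topSumObjective_sub_of_le (l : ℕ) (w : ι → ℝ) {μ t : ℝ} (h : μ ≤ t) :
    (l - #{j | μ < w j} : ℝ) * (t - μ) ≤ topSumObjective l w t - topSumObjective l w μ := by
  have hterm : ∀ j, (if μ < w j then μ - t else 0) ≤ max (w j - t) 0 - max (w j - μ) 0 := by
    intro j
    split_ifs <;> simp only [max_def] <;> split_ifs <;> linarith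
  have hsum := sum_le_sum fun j (_ : j ∈ univ) => hterm j
  rw [sum_ite, sum_const, sum_const_zero, add_zero, nsmul_eq_mul, sum_sub_distrib] at hsum
  unfold topSumObjective
  linarith

lemma mul_sub_le_topSumObjective_sub_of_ge (l : ℕ) (w : ι → ℝ) {μ t : ℝ} (h : t ≤ μ) :
    (#{j | μ ≤ w j} - l : ℝ) * (μ - t) ≤ topSumObjective l w t - topSumObjective l w μ := by
  have hterm : ∀ j, (if μ ≤ w j then μ - t else 0) ≤ max (w j - t) 0 - max (w j - μ) 0 := by
    intro j
    split_ifs <;> simp only [max_def] <;> split_ifs <;> linarith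
  have hsum := sum_le_sum fun j (_ : j ∈ univ) => hterm j
  rw [sum_ite, sum_const, sum_const_zero, add_zero, nsmul_eq_mul, sum_sub_distrib] at hsum
  unfold topSumObjective
  linarith

lemma topSumObjective_le_of_card_le {l : ℕ} {w : ι → ℝ} {t : ℝ} (hlt : #{j | t < w j} ≤ l)
    (hle : l ≤ #{j | t ≤ w j}) (u : ℝ) : topSumObjective l w t ≤ topSumObjective l w u := by
  rcases le_total t u with htu | hut
  · have hnonneg : (0 : ℝ) ≤ (l - #{j | t < w j} : ℝ) * (u - t) :=
      mul_nonneg (by simp [hlt]) (by linarith)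
    linarith [mul_sub_le_topSumObjective_sub_of_le l w htu]
  · have hnonneg : (0 : ℝ) ≤ (#{j | t ≤ w j} - l : ℝ) * (t - u) :=
      mul_nonneg (by simp [hle]) (by linarith)
    linarith [mul_sub_le_topSumObjective_sub_of_ge l w hut]

lemma sub_le_topSumObjective_sub_of_card_lt {l : ℕ} {w : ι → ℝ} {b t : ℝ}
    (hb : #{j | b < w j} < l) (ht : b ≤ t) :
    t - b ≤ topSumObjective l w t - topSumObjective l w b := by
  have hslope : (1 : ℝ) ≤ l - #{j | b < w j} := by
    rw [le_sub_iff_add_le']; exact_mod_cast hb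
  exact (le_mul_of_one_le_left (sub_nonneg.2 ht) hslope).trans
    (mul_sub_le_topSumObjective_sub_of_le l w ht)

lemma sub_le_topSumObjective_sub_of_lt_card {l : ℕ} {w : ι → ℝ} {a t : ℝ}
    (ha : l < #{j | a ≤ w j}) (ht : t ≤ a) :
    a - t ≤ topSumObjective l w t - topSumObjective l w a := by
  have hslope : (1 : ℝ) ≤ #{j | a ≤ w j} - l := by
    rw [le_sub_iff_add_le']; exact_mod_cast ha
  exact (le_mul_of_one_le_left (sub_nonneg.2 ht) hslope).trans
    (mul_sub_le_topSumObjective_sub_of_ge l w ht)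

lemma sum_topSumObjective {κ : Type*} [Fintype κ] (l : ℕ) (w : ι → κ → ℝ) (lam : ι → ℝ) :
    ∑ i, topSumObjective l (w i) (lam i) = l * ∑ i, lam i + ∑ i, ∑ j, max (w i j - lam i) 0 := by
  simp only [topSumObjective, sum_add_distrib, mul_sum]

lemma sum_sum_max_sub_le_add {κ E : Type*} [Fintype κ] [SeminormedAddCommGroup E] {B : ℝ}
    {s : ι → κ → E → ℝ} (hlip : ∀ i j u v, |s i j u - s i j v| ≤ B * ‖u - v‖)
    (lam : ι → ℝ) (u v : E) :
    ∑ i, ∑ j, max (s i j u - lam i) 0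
      ≤ ∑ i, ∑ j, max (s i j v - lam i) 0 + Fintype.card ι * Fintype.card κ * B * ‖u - v‖ := by
  have hterm : ∀ i j, max (s i j u - lam i) 0 ≤ max (s i j v - lam i) 0 + B * ‖u - v‖ := by
    intro i j
    have h := abs_max_sub_max_le_abs (s i j u - lam i) (s i j v - lam i) 0
    rw [sub_sub_sub_cancel_right] at h
    linarith [(abs_le.1 (h.trans (hlip i j u v))).2]
  calc ∑ i, ∑ j, max (s i j u - lam i) 0
      ≤ ∑ i, ∑ j, (max (s i j v - lam i) 0 + B * ‖u - v‖) := by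
        gcongr with i _ j _
        exact hterm i j
    _ = _ := by simp only [sum_add_distrib, sum_const, card_univ, nsmul_eq_mul]; ring

end TopSum

section SortedTuple

variable {α : Type*} [LinearOrder α] {n : ℕ}

lemma card_filter_sort_lt_le (w : Fin n → α) (k : Fin n) :
    #{j | w (Tuple.sort w k) < w j} ≤ n - 1 - k := by
  rw [← Fin.card_Ioi]
  refine card_le_card_of_injOn (Tuple.sort w).symm (fun j hj => ?_)
    (Tuple.sort w).symm.injective.injOn
  replace hj := (mem_filter.1 (mem_coe.1 hj)).2
  simp only [coe_Ioi, Set.mem_Ioi]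
  by_contra! hjk
  have hle := Tuple.monotone_sort w hjk
  simp only [Function.comp_apply, Equiv.apply_symm_apply] at hle
  exact hle.not_gt hj

lemma le_card_filter_sort_le (w : Fin n → α) (k : Fin n) :
    n - k ≤ #{j | w (Tuple.sort w k) ≤ w j} := by
  rw [← Fin.card_Ici]
  refine card_le_card_of_injOn (Tuple.sort w) (fun j hj => ?_) (Tuple.sort w).injective.injOn
  simp only [coe_Ici, Set.mem_Ici] at hj
  simpa using Tuple.monotone_sort w hj

end SortedTuple

lemma infDist_minimizers_le_sub_of_sharp {f : ℝ → ℝ} {a b : ℝ} (hab : a ≤ b)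
    (hmin : ∀ x ∈ Set.Icc a b, ∀ u, f x ≤ f u) (hright : ∀ t, b ≤ t → t - b ≤ f t - f b)
    (hleft : ∀ t, t ≤ a → a - t ≤ f t - f a) (t : ℝ) :
    infDist t {x | ∀ u, f x ≤ f u} ≤ f t - f b := by
  set Λ := {x | ∀ u, f x ≤ f u}
  have hΛ : Set.Icc a b ⊆ Λ := hmin
  have hfab : f a = f b := le_antisymm (hmin a ⟨le_rfl, hab⟩ b) (hmin b ⟨hab, le_rfl⟩ a)
  rcases le_or_gt t a with hta | hat
  · calc infDist t _ ≤ dist t a := infDist_le_dist_of_mem (hΛ ⟨le_rfl, hab⟩)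
      _ = a - t := by rw [Real.dist_eq, abs_of_nonpos (by linarith)]; ring
      _ ≤ f t - f b := hfab ▸ hleft t hta
  rcases le_or_gt b t with hbt | htb
  · calc infDist t _ ≤ dist t b := infDist_le_dist_of_mem (hΛ ⟨hab, le_rfl⟩)
      _ = t - b := by rw [Real.dist_eq, abs_of_nonneg (by linarith)]
      _ ≤ f t - f b := hright t hbt
  · calc infDist t _ = 0 := infDist_zero_of_mem (hΛ ⟨hat.le, htb.le⟩)
      _ ≤ f t - f b := sub_nonneg.mpr (hmin b ⟨hab, le_rfl⟩ t)

lemma exists_topSumObjective_isMin_and_infDist_le {n l : ℕ} (hl1 : 1 ≤ l) (hl2 : l + 1 ≤ n)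
    (w : Fin n → ℝ) : ∃ μ, (∀ t, topSumObjective l w μ ≤ topSumObjective l w t) ∧
      ∀ t, infDist t {x | ∀ u, topSumObjective l w x ≤ topSumObjective l w u}
        ≤ topSumObjective l w t - topSumObjective l w μ := by
  set ka : Fin n := ⟨n - l - 1, by omega⟩
  set kb : Fin n := ⟨n - l, by omega⟩
  set a := w (Tuple.sort w ka)
  set b := w (Tuple.sort w kb)
  have hab : a ≤ b := Tuple.monotone_sort w (Fin.mk_le_mk.2 (by omega))
  have hb_lt : #{j | b < w j} < l := by
    have : #{j | b < w j} ≤ n - 1 - (n - l) := card_filter_sort_lt_le w kb; omega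
  have hb_le : l ≤ #{j | b ≤ w j} := by
    have : n - (n - l) ≤ #{j | b ≤ w j} := le_card_filter_sort_le w kb; omega
  have ha_lt : #{j | a < w j} ≤ l := by
    have : #{j | a < w j} ≤ n - 1 - (n - l - 1) := card_filter_sort_lt_le w ka; omega
  have ha_le : l < #{j | a ≤ w j} := by
    have : n - (n - l - 1) ≤ #{j | a ≤ w j} := le_card_filter_sort_le w ka; omega
  have hmin : ∀ x ∈ Set.Icc a b, ∀ u, topSumObjective l w x ≤ topSumObjective l w u := by
    rintro x ⟨hax, hxb⟩
    refine topSumObjective_le_of_card_le ?_ ?_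
    · refine (card_le_card fun j => ?_).trans ha_lt
      simp only [mem_filter, mem_univ, true_and]
      exact hax.trans_lt
    · refine hb_le.trans (card_le_card fun j => ?_)
      simp only [mem_filter, mem_univ, true_and]
      exact hxb.trans
  exact ⟨b, hmin b ⟨hab, le_rfl⟩, infDist_minimizers_le_sub_of_sharp hab hmin
    (fun _ => sub_le_topSumObjective_sub_of_card_lt hb_lt)
    (fun _ => sub_le_topSumObjective_sub_of_lt_card ha_le)⟩

section EuclideanSpace

variable {ι : Type*} [Fintype ι]

lemma EuclideanSpace.dist_le_sum_dist (x y : EuclideanSpace ℝ ι) :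
    dist x y ≤ ∑ i, dist (x i) (y i) := by
  rw [EuclideanSpace.dist_eq, Real.sqrt_le_iff]
  exact ⟨sum_nonneg fun _ _ => dist_nonneg, sum_sq_le_sq_sum_of_nonneg fun _ _ => dist_nonneg⟩

lemma infDist_setOf_forall_mem_le_sum (x : EuclideanSpace ℝ ι) {S : ι → Set ℝ}
    (hS : ∀ i, (S i).Nonempty) :
    infDist x {y : EuclideanSpace ℝ ι | ∀ i, y i ∈ S i} ≤ ∑ i, infDist (x i) (S i) := by
  refine le_of_forall_pos_le_add fun ε hε => ?_
  -- dividing by `card ι + 1` rather than `card ι` keeps the empty index type uniform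
  have hδ : 0 < ε / (Fintype.card ι + 1) := by positivity
  choose y hyS hy using fun i =>
    (infDist_lt_iff (hS i)).1 (lt_add_of_pos_right (infDist (x i) (S i)) hδ)
  calc infDist x {y : EuclideanSpace ℝ ι | ∀ i, y i ∈ S i}
      ≤ dist x (WithLp.toLp 2 y) := infDist_le_dist_of_mem hyS
    _ ≤ ∑ i, dist (x i) (y i) := EuclideanSpace.dist_le_sum_dist _ _
    _ ≤ ∑ i, (infDist (x i) (S i) + ε / (Fintype.card ι + 1)) := by gcongr with i; exact (hy i).le
    _ ≤ ∑ i, infDist (x i) (S i) + ε := by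
      rw [sum_add_distrib, sum_const, card_univ, nsmul_eq_mul, ← mul_div_assoc]
      gcongr
      rw [div_le_iff₀ (by positivity)]
      nlinarith

end EuclideanSpace

theorem stmt16_general (d Np Nm : ℕ)
    (B : ℝ)
    (s : Fin Np → Fin Nm → EuclideanSpace ℝ (Fin d) → ℝ)
    (hlip : ∀ (i : Fin Np) (j : Fin Nm) (u v : EuclideanSpace ℝ (Fin d)),
      |s i j u - s i j v| ≤ B * ‖u - v‖)
    (l : ℕ) (hl1 : 1 ≤ l) (hl2 : l + 1 ≤ Nm)
    (vstar : EuclideanSpace ℝ (Fin d))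
    (Λ : Fin Np → Set ℝ)
    (hΛ : ∀ i, Λ i = {lami : ℝ | ∀ t : ℝ,
      (l : ℝ) * lami + ∑ j, max (s i j vstar - lami) 0
        ≤ (l : ℝ) * t + ∑ j, max (s i j vstar - t) 0})
    (v : EuclideanSpace ℝ (Fin d)) (lam : EuclideanSpace ℝ (Fin Np)) :
    ((Np : ℝ) * Nm * B * ‖v - vstar‖
        + ((l : ℝ) * ∑ i, lam i + ∑ i, ∑ j, max (s i j v - lam i) 0)
        - sInf (Set.range fun lam' : Fin Np → ℝ =>
            (l : ℝ) * ∑ i, lam' i + ∑ i, ∑ j, max (s i j vstar - lam' i) 0)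
      ≥ ∑ i, Metric.infDist (lam i) (Λ i)) ∧
    (∑ i, Metric.infDist (lam i) (Λ i)
      ≥ Metric.infDist lam {lam' : EuclideanSpace ℝ (Fin Np) | ∀ i, lam' i ∈ Λ i}) := by
  set f : Fin Np → ℝ → ℝ := fun i => topSumObjective l fun j => s i j vstar
  choose μ hmin hdist using fun i =>
    exists_topSumObjective_isMin_and_infDist_le hl1 hl2 fun j => s i j vstar
  have hsInf : sInf (Set.range fun lam' : Fin Np → ℝ =>
      (l : ℝ) * ∑ i, lam' i + ∑ i, ∑ j, max (s i j vstar - lam' i) 0) ≤ ∑ i, f i (μ i) := by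
    refine csInf_le ⟨∑ i, f i (μ i), ?_⟩ ⟨μ, (sum_topSumObjective l _ μ).symm⟩
    rintro _ ⟨lam', rfl⟩
    exact (sum_le_sum fun i _ => hmin i (lam' i)).trans_eq (sum_topSumObjective l _ lam')
  have hlam : ∑ i, infDist (lam i) (Λ i) ≤ ∑ i, f i (lam i) - ∑ i, f i (μ i) := by
    rw [← sum_sub_distrib]
    exact sum_le_sum fun i _ => hΛ i ▸ hdist i (lam i)
  have hv := sum_sum_max_sub_le_add hlip lam vstar v
  rw [sum_topSumObjective] at hlam
  simp only [Fintype.card_fin, norm_sub_rev vstar v] at hv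
  exact ⟨by linarith, infDist_setOf_forall_mem_le_sum lam fun i => ⟨μ i, hΛ i ▸ hmin i⟩⟩

/-- Error-bound lemma for `g^l` (Lemma 5 of the paper).  Each `s i j : ℝ^d → ℝ` is
`B`-Lipschitz, `1 ≤ l ≤ N₋−1`, `v* ∈ ℝ^d`, `Λ*_i` is the set of minimizers of
`λᵢ ↦ lλᵢ + ∑ⱼ [s_{ij}(v*) − λᵢ]₊`, and `Λ* = Π_i Λ*_i`.  Then for every `v` and `λ`:
`N₊N₋B‖v − v*‖ + g^l(v, λ) − min_{λ′} g^l(v*, λ′) ≥ ∑ᵢ dist(λᵢ, Λ*_i) ≥ dist(λ, Λ*)`,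
the last distance being the Euclidean distance in `ℝ^{N₊}`. -/
theorem stmt16 (d Np Nm : ℕ) (hd : 0 < d) (hNp : 0 < Np) (hNm : 0 < Nm)
    (B : ℝ) (hB : 0 ≤ B)
    (s : Fin Np → Fin Nm → EuclideanSpace ℝ (Fin d) → ℝ)
    (hlip : ∀ (i : Fin Np) (j : Fin Nm) (u v : EuclideanSpace ℝ (Fin d)),
      |s i j u - s i j v| ≤ B * ‖u - v‖)
    (l : ℕ) (hl1 : 1 ≤ l) (hl2 : l + 1 ≤ Nm)
    (vstar : EuclideanSpace ℝ (Fin d))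
    (Λ : Fin Np → Set ℝ)
    (hΛ : ∀ i, Λ i = {lami : ℝ | ∀ t : ℝ,
      (l : ℝ) * lami + ∑ j, max (s i j vstar - lami) 0
        ≤ (l : ℝ) * t + ∑ j, max (s i j vstar - t) 0})
    (v : EuclideanSpace ℝ (Fin d)) (lam : EuclideanSpace ℝ (Fin Np)) :
    ((Np : ℝ) * Nm * B * ‖v - vstar‖
        + ((l : ℝ) * ∑ i, lam i + ∑ i, ∑ j, max (s i j v - lam i) 0)
        - sInf (Set.range fun lam' : Fin Np → ℝ =>
            (l : ℝ) * ∑ i, lam' i + ∑ i, ∑ j, max (s i j vstar - lam' i) 0)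
      ≥ ∑ i, Metric.infDist (lam i) (Λ i)) ∧
    (∑ i, Metric.infDist (lam i) (Λ i)
      ≥ Metric.infDist lam {lam' : EuclideanSpace ℝ (Fin Np) | ∀ i, lam' i ∈ Λ i}) :=
  stmt16_general d Np Nm B s hlip l hl1 hl2 vstar Λ hΛ v lam
end
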